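/- Let q be a smooth function on [m0, m1] with q > k^2 for a constant k > 0, and let a be a nontrivial solution of -a'' + q·a = 0 with boundary condition a'(m0) + α·a(m0) = 0 where α ≤ k. Let v be the unique solution of -v'' + k^2·v = 0 with v(m0) = a(m0), v'(m0) = a'(m0). Then a'(u)/a(u) ≥ v'(u)/v(u) for all u in [m0, m1]. -/

import Mathlib

open Set Real

private lemma deriv_reg {f : ℝ → ℝ} (h : ContDiff ℝ 2 f) :
    Differentiable ℝ (deriv f) ∧ Continuous (deriv f) := by
  have h2 : ContDiff ℝ 1 (deriv f) :=
    (contDiff_succ_iff_deriv.mp (by norm_num at h ⊢; exact h)).2.2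
  exact ⟨h2.differentiable one_ne_zero, h2.continuous⟩

private lemma exp_hda (c x : ℝ) :
    HasDerivAt (fun x => Real.exp (c * x)) (c * Real.exp (c * x)) x := by
  have := (((hasDerivAt_id x).const_mul c)).exp
  simp only [id] at this
  convert this using 1; ring

private lemma stmt0_key (m0 m1 k α : ℝ) (a v q : ℝ → ℝ)
    (hk : 0 < k) (hα : α ≤ k) (hm : m0 ≤ m1)
    (ha : ContDiff ℝ 2 a) (hvreg : ContDiff ℝ 2 v)
    (hq : ∀ u ∈ Set.Icc m0 m1, k ^ 2 < q u)
    (hODE : ∀ u ∈ Set.Icc m0 m1, deriv (deriv a) u = q u * a u)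
    (hbc : deriv a m0 + α * a m0 = 0)
    (hvODE : ∀ u, deriv (deriv v) u = k ^ 2 * v u)
    (hv0 : v m0 = a m0) (hv1 : deriv v m0 = deriv a m0)
    (hpos : 0 < a m0) :
    ∀ u ∈ Set.Icc m0 m1, deriv v u / v u ≤ deriv a u / a u := by
  obtain ⟨hda', hca'⟩ := deriv_reg ha
  obtain ⟨hdv', hcv'⟩ := deriv_reg hvreg
  have hda : Differentiable ℝ a := ha.differentiable two_ne_zero
  have hdv : Differentiable ℝ v := hvreg.differentiable two_ne_zero
  -- Step A: (v' + k v) e^{-kt} is constant, with nonneg value; hence v > 0 on [m0,∞)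
  have ham0 : deriv a m0 = -α * a m0 := by linarith
  have hCnn : 0 ≤ deriv v m0 + k * v m0 := by
    rw [hv0, hv1, ham0]; nlinarith
  have hpder : ∀ x, HasDerivAt (fun t => (deriv v t + k * v t) * Real.exp (-k * t)) 0 x := by
    intro x
    have h1 : HasDerivAt (fun t => deriv v t + k * v t)
        (deriv (deriv v) x + k * deriv v x) x :=
      ((hdv' x).hasDerivAt).add (((hdv x).hasDerivAt).const_mul k)
    have h2 := h1.mul (exp_hda (-k) x)
    refine h2.congr_deriv ?_
    rw [hvODE x]; ring
  have hvk : ∀ t, 0 ≤ deriv v t + k * v t := by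
    intro t
    have hconst : (deriv v t + k * v t) * Real.exp (-k * t)
        = (deriv v m0 + k * v m0) * Real.exp (-k * m0) :=
      is_const_of_deriv_eq_zero (fun x => (hpder x).differentiableAt)
        (fun x => (hpder x).deriv) t m0
    have h3 : 0 ≤ (deriv v t + k * v t) * Real.exp (-k * t) := by
      rw [hconst]; positivity
    have := Real.exp_pos (-k * t)
    nlinarith
  have hvpos : ∀ t, m0 ≤ t → 0 < v t := by
    intro t ht
    have hmono : Monotone (fun t => v t * Real.exp (k * t)) := by
      apply monotone_of_deriv_nonneg
      · exact fun x => (((hdv x).hasDerivAt).mul (exp_hda k x)).differentiableAt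
      · intro x
        have hd : deriv (fun t => v t * Real.exp (k * t)) x = _ := (((hdv x).hasDerivAt).mul (exp_hda k x)).deriv
        rw [hd]
        have h4 := hvk x
        have := Real.exp_pos (k * x)
        nlinarith
    have h5 : v m0 * Real.exp (k * m0) ≤ v t * Real.exp (k * t) := hmono ht
    have h6 : 0 < v m0 * Real.exp (k * m0) := by
      rw [hv0]; positivity
    nlinarith [Real.exp_pos (k * t)]
  -- The Wronskian
  set W : ℝ → ℝ := fun t => deriv a t * v t - a t * deriv v t with hWdef
  have hWder : ∀ x, HasDerivAt W (deriv (deriv a) x * v x - a x * deriv (deriv v) x) x := by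
    intro x
    have h1 := ((hda' x).hasDerivAt).mul ((hdv x).hasDerivAt)
    have h2 := ((hda x).hasDerivAt).mul ((hdv' x).hasDerivAt)
    have := h1.sub h2
    refine this.congr_deriv ?_; ring
  have hWderIcc : ∀ x ∈ Icc m0 m1, deriv W x = (q x - k ^ 2) * (a x * v x) := by
    intro x hx
    rw [(hWder x).deriv, hODE x hx, hvODE x]; ring
  have hWm0 : W m0 = 0 := by
    simp only [hWdef, hv0, hv1]; ring
  have hWcont : Continuous W := (hca'.mul hdv.continuous).sub (hda.continuous.mul hcv')
  -- Step B: a > 0 on [m0, m1]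
  have hapos : ∀ u ∈ Icc m0 m1, 0 < a u := by
    by_contra hcon
    push_neg at hcon
    obtain ⟨u, hu, hau⟩ := hcon
    have hZne : ∃ c ∈ Icc m0 m1, a c = 0 := by
      rcases eq_or_lt_of_le hau with h | h
      · exact ⟨u, hu, h⟩
      · have hiv : (0:ℝ) ∈ Icc (a u) (a m0) := ⟨le_of_lt h, le_of_lt hpos⟩
        obtain ⟨c, hc, hc0⟩ := intermediate_value_Icc' hu.1 hda.continuous.continuousOn hiv
        exact ⟨c, ⟨hc.1, le_trans hc.2 hu.2⟩, hc0⟩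
    set Z : Set ℝ := {t ∈ Icc m0 m1 | a t = 0} with hZdef
    have hZne' : Z.Nonempty := by
      obtain ⟨c, hc, hc0⟩ := hZne; exact ⟨c, hc, hc0⟩
    have hZclosed : IsClosed Z := by
      have : Z = Icc m0 m1 ∩ a ⁻¹' {0} := by ext t; simp [hZdef]
      rw [this]
      exact isClosed_Icc.inter (isClosed_singleton.preimage hda.continuous)
    have hZbdd : BddBelow Z := ⟨m0, fun t ht => ht.1.1⟩
    set t0 := sInf Z with ht0def
    have ht0mem : t0 ∈ Z := hZclosed.csInf_mem hZne' hZbdd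
    obtain ⟨⟨ht0m0, ht0m1⟩, hat0⟩ := ht0mem
    have ht0gt : m0 < t0 := by
      rcases eq_or_lt_of_le ht0m0 with h | h
      · exfalso; rw [← h] at hat0; exact absurd hat0 (ne_of_gt hpos)
      · exact h
    have hapos' : ∀ s, m0 ≤ s → s < t0 → 0 < a s := by
      intro s hs hst
      by_contra hc
      push_neg at hc
      rcases eq_or_lt_of_le hc with h | h
      · have : s ∈ Z := ⟨⟨hs, le_trans (le_of_lt hst) ht0m1⟩, h⟩
        exact absurd (csInf_le hZbdd this) (not_le.mpr hst)
      · have hiv : (0:ℝ) ∈ Icc (a s) (a m0) := ⟨le_of_lt h, le_of_lt hpos⟩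
        obtain ⟨c, hc', hc0⟩ := intermediate_value_Icc' hs hda.continuous.continuousOn hiv
        have hcZ : c ∈ Z := ⟨⟨hc'.1, le_trans hc'.2 (le_trans (le_of_lt hst) ht0m1)⟩, hc0⟩
        have : t0 ≤ s := le_trans (csInf_le hZbdd hcZ) hc'.2
        exact absurd this (not_le.mpr hst)
    -- W strictly increasing on [m0, t0]
    have hWmono : StrictMonoOn W (Icc m0 t0) := by
      apply strictMonoOn_of_deriv_pos (convex_Icc m0 t0) hWcont.continuousOn
      intro x hx
      rw [interior_Icc] at hx
      have hxIcc : x ∈ Icc m0 m1 := ⟨le_of_lt hx.1, le_trans (le_of_lt hx.2) ht0m1⟩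
      rw [hWderIcc x hxIcc]
      exact mul_pos (sub_pos.mpr (hq x hxIcc))
        (mul_pos (hapos' x (le_of_lt hx.1) hx.2) (hvpos x (le_of_lt hx.1)))
    have hWt0 : 0 < W t0 := by
      have := hWmono (left_mem_Icc.mpr (le_of_lt ht0gt)) (right_mem_Icc.mpr (le_of_lt ht0gt)) ht0gt
      rwa [hWm0] at this
    have hdat0 : 0 < deriv a t0 := by
      have hvt0 := hvpos t0 ht0m0
      have hW : W t0 = deriv a t0 * v t0 := by simp [hWdef, hat0]
      rw [hW] at hWt0
      by_contra hle
      push_neg at hle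
      nlinarith
    -- continuity of deriv a near t0 gives a δ
    obtain ⟨δ, hδpos, hδ⟩ : ∃ δ > 0, ∀ s, dist s t0 < δ → 0 < deriv a s := by
      have hset : deriv a ⁻¹' (Ioi 0) ∈ nhds t0 :=
        hca'.continuousAt.preimage_mem_nhds (Ioi_mem_nhds hdat0)
      rw [Metric.mem_nhds_iff] at hset
      obtain ⟨δ, hδpos, hδ⟩ := hset
      exact ⟨δ, hδpos, fun s hs => hδ hs⟩
    set s1 := max m0 (t0 - δ / 2) with hs1def
    have hs1lt : s1 < t0 := max_lt ht0gt (by linarith)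
    have hamono : StrictMonoOn a (Icc s1 t0) := by
      apply strictMonoOn_of_deriv_pos (convex_Icc s1 t0) hda.continuous.continuousOn
      intro x hx
      rw [interior_Icc] at hx
      apply hδ
      rw [Real.dist_eq, abs_sub_lt_iff]
      constructor
      · linarith [hx.2]
      · have : t0 - δ / 2 ≤ s1 := le_max_right _ _
        have := hx.1
        linarith
    have h7 : a s1 < a t0 :=
      hamono (left_mem_Icc.mpr (le_of_lt hs1lt)) (right_mem_Icc.mpr (le_of_lt hs1lt)) hs1lt
    have h8 : 0 < a s1 := hapos' s1 (le_max_left _ _) hs1lt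
    rw [hat0] at h7
    linarith
  -- Step C: conclude
  have hWmono2 : MonotoneOn W (Icc m0 m1) := by
    apply monotoneOn_of_deriv_nonneg (convex_Icc m0 m1) hWcont.continuousOn
    · exact fun x _ => (hWder x).differentiableAt.differentiableWithinAt
    · intro x hx
      rw [interior_Icc] at hx
      have hxIcc : x ∈ Icc m0 m1 := ⟨le_of_lt hx.1, le_of_lt hx.2⟩
      rw [hWderIcc x hxIcc]
      have := mul_pos (sub_pos.mpr (hq x hxIcc)) (mul_pos (hapos x hxIcc) (hvpos x hxIcc.1))
      linarith
  intro u hu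
  have hWu : 0 ≤ W u := by
    have := hWmono2 (left_mem_Icc.mpr hm) hu hu.1
    rwa [hWm0] at this
  rw [div_le_div_iff₀ (hvpos u hu.1) (hapos u hu)]
  simp only [hWdef] at hWu
  nlinarith

/-- Sturm-type comparison: for a nontrivial solution `a` of `-a'' + q a = 0`
on `[m0, m1]` with `q > k^2`, boundary condition `a'(m0) + α a(m0) = 0`, `α ≤ k`,
and the comparison solution `v` of `-v'' + k^2 v = 0` with the same initial data,
one has `a'/a ≥ v'/v` on `[m0, m1]`. -/
theorem stmt0 (m0 m1 k α : ℝ) (a v q : ℝ → ℝ)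
    (hk : 0 < k) (hα : α ≤ k) (hm : m0 ≤ m1)
    (ha : ContDiff ℝ 2 a) (hvreg : ContDiff ℝ 2 v)
    (hqs : ContDiff ℝ (⊤ : ℕ∞) q)
    (hq : ∀ u ∈ Set.Icc m0 m1, k ^ 2 < q u)
    (hODE : ∀ u ∈ Set.Icc m0 m1, deriv (deriv a) u = q u * a u)
    (hnt : ∃ u ∈ Set.Icc m0 m1, a u ≠ 0)
    (hbc : deriv a m0 + α * a m0 = 0)
    (hvODE : ∀ u, deriv (deriv v) u = k ^ 2 * v u)
    (hv0 : v m0 = a m0) (hv1 : deriv v m0 = deriv a m0) :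
    ∀ u ∈ Set.Icc m0 m1, deriv v u / v u ≤ deriv a u / a u := by
  obtain ⟨hda', hca'⟩ := deriv_reg ha
  have hda : Differentiable ℝ a := ha.differentiable two_ne_zero
  -- a m0 ≠ 0 by a Gronwall-type energy argument
  have hm0ne : a m0 ≠ 0 := by
    intro hm00
    have hdm00 : deriv a m0 = 0 := by rw [hm00] at hbc; linarith
    obtain ⟨C, hC⟩ := isCompact_Icc.exists_bound_of_continuousOn
      (s := Icc m0 m1) (f := fun u => 1 + q u) (continuous_const.add hqs.continuous).continuousOn
    set h : ℝ → ℝ := fun t => (a t ^ 2 + deriv a t ^ 2) * Real.exp (-C * t) with hhdef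
    have hhder : ∀ x, HasDerivAt h
        ((2 * a x * deriv a x + 2 * deriv a x * deriv (deriv a) x) * Real.exp (-C * x)
          + (a x ^ 2 + deriv a x ^ 2) * (-C * Real.exp (-C * x))) x := by
      intro x
      have h1 : HasDerivAt (fun t => a t ^ 2 + deriv a t ^ 2)
          (2 * a x * deriv a x + 2 * deriv a x * deriv (deriv a) x) x := by
        have := (((hda x).hasDerivAt).pow 2).add (((hda' x).hasDerivAt).pow 2)
        refine this.congr_deriv ?_; push_cast; ring
      exact h1.mul (exp_hda (-C) x)
    have hanti : AntitoneOn h (Icc m0 m1) := by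
      apply antitoneOn_of_deriv_nonpos (convex_Icc m0 m1)
      · exact Continuous.continuousOn (by
          exact ((((hda.continuous.pow 2).add (hca'.pow 2))).mul
            (Real.continuous_exp.comp (continuous_const.mul continuous_id))))
      · exact fun x _ => (hhder x).differentiableAt.differentiableWithinAt
      · intro x hx
        rw [interior_Icc] at hx
        have hxIcc : x ∈ Icc m0 m1 := ⟨le_of_lt hx.1, le_of_lt hx.2⟩
        rw [(hhder x).deriv, hODE x hxIcc]
        have habs : |1 + q x| ≤ C := by
          have := hC x hxIcc; rwa [Real.norm_eq_abs] at this
        obtain ⟨h1, h2⟩ := abs_le.mp habs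
        have hexp := Real.exp_pos (-C * x)
        have key : 2 * a x * deriv a x + 2 * deriv a x * (q x * a x)
            + (a x ^ 2 + deriv a x ^ 2) * (-C) ≤ 0 := by
          nlinarith [sq_nonneg (a x + deriv a x), sq_nonneg (a x - deriv a x)]
        nlinarith
    obtain ⟨u, hu, hau⟩ := hnt
    have h9 : h u ≤ h m0 := hanti (left_mem_Icc.mpr hm) hu hu.1
    have h10 : h m0 = 0 := by simp [hhdef, hm00, hdm00]
    have h11 : 0 < h u := by
      have : 0 < a u ^ 2 + deriv a u ^ 2 := by positivity
      simp only [hhdef]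
      positivity
    linarith
  rcases lt_or_gt_of_ne hm0ne with hneg | hpos
  · -- apply key lemma to -a, -v
    have hd1a : deriv (fun x => -a x) = fun x => -deriv a x := funext fun x => deriv.neg
    obtain ⟨hdv', _⟩ := deriv_reg hvreg
    have hd1v : deriv (fun x => -v x) = fun x => -deriv v x := funext fun x => deriv.neg
    have key := stmt0_key m0 m1 k α (fun x => -a x) (fun x => -v x) q hk hα hm
      ha.neg hvreg.neg hq
      (by
        intro u hu
        rw [hd1a]
        have : deriv (fun x => -deriv a x) u = -deriv (deriv a) u := deriv.neg
        rw [this, hODE u hu]; ring)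
      (by rw [hd1a]; simp only; linarith)
      (by
        intro u
        rw [hd1v]
        have : deriv (fun x => -deriv v x) u = -deriv (deriv v) u := deriv.neg
        rw [this, hvODE u]; ring)
      (by simp [hv0]) (by rw [hd1a, hd1v]; simp [hv1])
      (by simpa using hneg)
    intro u hu
    have := key u hu
    rw [hd1a, hd1v] at this
    simpa [neg_div_neg_eq] using this
  · exact stmt0_key m0 m1 k α a v q hk hα hm ha hvreg hq hODE hbc hvODE hv0 hv1 hpos
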